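/- arXiv:1803.00862 — 2 statements merged into one kernel-verified Lean document; each statement's English description precedes it below -/
import Mathlib

section
/- (Dual cone characterization, ρ > 0 case, one direction) Suppose λ = (ρ, s, z) with ρ > 0 and z − (1/(4ρ)) T*(s sᴴ) ∈ C*. Then for every (v, x, u) ∈ K one has ρv + Re(sᴴx) + zᵀu ≥ 0; i.e., λ ∈ K*. -/
/-!
Completing the square: positivity of `[[T(u), x], [xᴴ, v]]` at the vector `(s/(2ρ), 1)` gives
`ρ v + Re(sᴴx) ≥ -(1/(4ρ)) Re(sᴴ T(u) s)`. By the adjoint identity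
`Re(sᴴ T(u) s) = Re tr(T(u)ᴴ s sᴴ) = T*(s sᴴ)ᵀ u`, and the dual-cone hypothesis tested against
`T(u) ⪰ 0` bounds this from above by `4ρ zᵀu`.
-/

open Complex Matrix ComplexOrder

noncomputable section

/-- Hermitian Toeplitz matrix with first row `(2u₀, u₁ + j u_N, …, u_{N-1} + j u_{2N-2})`. -/
def Tmat (N : ℕ) (u : Fin (2*N-1) → ℝ) : Matrix (Fin N) (Fin N) ℂ :=
  fun n m =>
    let g : ℕ → ℝ := fun k => if h : k < 2*N-1 then u ⟨k, h⟩ else 0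
    let r : ℕ → ℂ := fun k =>
      if k = 0 then ((2 * g 0 : ℝ) : ℂ) else ((g k : ℝ) : ℂ) + Complex.I * ((g (N-1+k) : ℝ) : ℂ)
    if (n : ℕ) ≤ (m : ℕ) then r ((m : ℕ) - (n : ℕ)) else star (r ((n : ℕ) - (m : ℕ)))

/-- The block matrix `[[T(u), x], [xᴴ, v]]`. -/
def Kmat (N : ℕ) (v : ℝ) (x : Fin N → ℂ) (u : Fin (2*N-1) → ℝ) :
    Matrix (Fin N ⊕ Unit) (Fin N ⊕ Unit) ℂ :=
  Matrix.fromBlocks (Tmat N u) (fun i _ => x i) (fun _ j => star (x j)) (fun _ _ => (v : ℂ))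

/-- Sum over the n-th upper diagonal of B. -/
def diagSum (N : ℕ) (B : Matrix (Fin N) (Fin N) ℂ) (n : ℕ) : ℂ :=
  ∑ m : Fin N, ∑ l : Fin N, if (l : ℕ) = (m : ℕ) + n then B m l else 0

/-- The adjoint `T*` of the linear map `T`:
`T*(B) = (2β₀, 2Re β₁, …, 2Re β_{N-1}, 2Im β₁, …, 2Im β_{N-1})`. -/
def Tstar (N : ℕ) (B : Matrix (Fin N) (Fin N) ℂ) : Fin (2*N-1) → ℝ := fun k =>
  if (k : ℕ) = 0 then 2 * (diagSum N B 0).re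
  else if (k : ℕ) < N then 2 * (diagSum N B (k : ℕ)).re
  else 2 * (diagSum N B ((k : ℕ) - N + 1)).im

theorem trace_conjTranspose_mul {m n R : Type*} [Fintype m] [Fintype n]
    [NonUnitalNonAssocSemiring R] [Star R] (A B : Matrix m n R) :
    trace (Aᴴ * B) = ∑ i, ∑ j, star (A i j) * B i j := by
  simp only [trace, diag, mul_apply, conjTranspose_apply]
  exact Finset.sum_comm

theorem sum_range_ite_zero_eq_sum_range_pred {M : Type*} [AddCommMonoid M] (N : ℕ) (f : ℕ → M) :
    ∑ d ∈ Finset.range N, (if d = 0 then 0 else f d) = ∑ j ∈ Finset.range (N - 1), f (j + 1) := by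
  cases N with
  | zero => simp
  | succ N => simp [Finset.sum_range_succ']

theorem Matrix.PosSemidef.fromBlocks_quadratic_nonneg {n : Type*} [Fintype n]
    {A : Matrix n n ℂ} {x : n → ℂ} {v : ℝ}
    (h : (fromBlocks A (replicateCol Unit x) (replicateRow Unit (star x))
      (of fun _ _ => (v : ℂ))).PosSemidef)
    (t : ℝ) (y : n → ℂ) :
    0 ≤ t ^ 2 * (star y ⬝ᵥ A *ᵥ y).re + 2 * t * (star y ⬝ᵥ x).re + v := by
  set w : n ⊕ Unit → ℂ := Sum.elim ((t : ℂ) • y) fun _ => 1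
  have expand : star w ⬝ᵥ (fromBlocks A (replicateCol Unit x) (replicateRow Unit (star x))
        (of fun _ _ => (v : ℂ))) *ᵥ w
      = (t : ℂ) ^ 2 * (star y ⬝ᵥ A *ᵥ y) + t * (star y ⬝ᵥ x) + t * star (star y ⬝ᵥ x) + v := by
    have hstar : star w = Sum.elim ((t : ℂ) • star y) fun _ => 1 := by
      ext (i | i) <;> simp [w]
    have hcol : replicateCol Unit x *ᵥ (fun _ => 1) = x := by
      ext; simp [mulVec, dotProduct, replicateCol]
    have hconst : (of fun (_ _ : Unit) => (v : ℂ)) *ᵥ (fun _ => 1) = fun _ => (v : ℂ) := by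
      ext; simp [mulVec, dotProduct]
    have hone : ∀ f : Unit → ℂ, (fun _ => 1) ⬝ᵥ f = f () := fun f => by simp [dotProduct]
    rw [fromBlocks_mulVec, dotProduct_block, hstar]
    simp only [w, Sum.elim_comp_inl, Sum.elim_comp_inr, mulVec_smul, replicateRow_mulVec_eq_const]
    rw [hcol, hconst, hone, star_dotProduct x]
    simp only [dotProduct_add, smul_dotProduct, dotProduct_smul, Pi.add_apply, Pi.smul_apply,
      Function.const_apply, smul_eq_mul]
    ring
  have hw := (Complex.nonneg_iff.1 (h.dotProduct_mulVec_nonneg w)).1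
  rw [expand] at hw
  convert hw using 1
  simp only [add_re, ← ofReal_pow, re_ofReal_mul, Complex.star_def, conj_re, ofReal_re]
  ring

def zeroExtend {n : ℕ} (u : Fin n → ℝ) (k : ℕ) : ℝ := if h : k < n then u ⟨k, h⟩ else 0

def hermToeplitz (N : ℕ) (r : ℕ → ℂ) : Matrix (Fin N) (Fin N) ℂ :=
  fun n m => if (n : ℕ) ≤ m then r (m - n) else star (r (n - m))

def tmatCoeff (N : ℕ) (u : Fin (2*N-1) → ℝ) (k : ℕ) : ℂ :=
  if k = 0 then ((2 * zeroExtend u 0 : ℝ) : ℂ)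
  else (zeroExtend u k : ℂ) + I * (zeroExtend u (N-1+k) : ℂ)

theorem Tmat_eq_hermToeplitz (N : ℕ) (u : Fin (2*N-1) → ℝ) :
    Tmat N u = hermToeplitz N (tmatCoeff N u) := rfl

theorem isHermitian_hermToeplitz (N : ℕ) {r : ℕ → ℂ} (hr : star (r 0) = r 0) :
    (hermToeplitz N r).IsHermitian := by
  ext n m
  simp only [hermToeplitz, conjTranspose_apply]
  rcases lt_trichotomy (n : ℕ) m with h | h | h
  · simp [h.le, not_le.2 h]
  · simp [h, hr]
  · simp [h.le, not_le.2 h]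

theorem isHermitian_Tmat (N : ℕ) (u : Fin (2*N-1) → ℝ) : (Tmat N u).IsHermitian :=
  isHermitian_hermToeplitz N (r := tmatCoeff N u) (by simp [tmatCoeff])

theorem sum_diagSum_mul (N : ℕ) (B : Matrix (Fin N) (Fin N) ℂ) (c : ℕ → ℂ) :
    ∑ d ∈ Finset.range N, diagSum N B d * c d
      = ∑ m : Fin N, ∑ l : Fin N, if (m : ℕ) ≤ l then B m l * c (l - m) else 0 := by
  simp only [diagSum, Finset.sum_mul, ite_mul, zero_mul]
  rw [Finset.sum_comm]
  refine Finset.sum_congr rfl fun m _ => ?_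
  rw [Finset.sum_comm]
  refine Finset.sum_congr rfl fun l _ => ?_
  split_ifs with hml
  · rw [Finset.sum_eq_single_of_mem ((l : ℕ) - m) (by simp; omega)
      (fun d _ hd => if_neg (by omega)), if_pos (by omega)]
  · exact Finset.sum_eq_zero fun d _ => if_neg (by omega)

/-- The `d`-th diagonal is met once above and, for `d ≠ 0`, once more below the main diagonal,
where Hermitian symmetry of both factors turns it into the conjugate of the upper contribution. -/
theorem re_trace_conjTranspose_hermToeplitz_mul (N : ℕ) (r : ℕ → ℂ)
    {B : Matrix (Fin N) (Fin N) ℂ} (hB : B.IsHermitian) :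
    (trace ((hermToeplitz N r)ᴴ * B)).re = ∑ d ∈ Finset.range N,
      (diagSum N B d * (if d = 0 then star (r 0) else 2 * star (r d))).re := by
  have hentry : ∀ i j : Fin N, star (hermToeplitz N r i j) * B i j
      = (if (i : ℕ) ≤ j then B i j * star (r (j - i)) else 0)
        + (if (j : ℕ) < i then r (i - j) * B i j else 0) := by
    intro i j
    simp only [hermToeplitz]
    split_ifs <;> first | omega | simp [mul_comm]
  have hlower : ∑ i : Fin N, ∑ j : Fin N, (if (j : ℕ) < i then r (i - j) * B i j else 0)
      = star (∑ i : Fin N, ∑ j : Fin N, if (i : ℕ) ≤ j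
          then B i j * (if j - i = (0 : ℕ) then 0 else star (r (j - i))) else 0) := by
    rw [Finset.sum_comm]
    simp only [star_sum]
    refine Finset.sum_congr rfl fun i _ => Finset.sum_congr rfl fun j _ => ?_
    rw [← hB.apply i j]
    split_ifs <;> first | omega | simp [mul_comm]
  have hupper := sum_diagSum_mul N B fun d => star (r d)
  have hstrict := sum_diagSum_mul N B fun d => if d = 0 then 0 else star (r d)
  rw [trace_conjTranspose_mul,
    Finset.sum_congr rfl fun i _ => Finset.sum_congr rfl fun j _ => hentry i j]
  simp only [Finset.sum_add_distrib]
  rw [hlower, ← hupper, ← hstrict, Complex.add_re, Complex.star_def, Complex.conj_re,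
    ← Complex.add_re, ← Finset.sum_add_distrib, Complex.re_sum]
  refine Finset.sum_congr rfl fun d _ => congrArg Complex.re ?_
  split_ifs with hd
  · rw [hd]; ring
  · ring

theorem sum_Tstar_mul_eq_sum_diagSum (N : ℕ) (u : Fin (2*N-1) → ℝ)
    (B : Matrix (Fin N) (Fin N) ℂ) :
    ∑ k, Tstar N B k * u k = ∑ d ∈ Finset.range N,
      (diagSum N B d * (if d = 0 then star (tmatCoeff N u 0)
        else 2 * star (tmatCoeff N u d))).re := by
  -- the first two branches of `Tstar` agree at `k = 0`
  have hfin : ∀ k : Fin (2*N-1), Tstar N B k * u k = (if (k : ℕ) < N then 2 * (diagSum N B k).re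
      else 2 * (diagSum N B (k - N + 1)).im) * zeroExtend u k := by
    rintro ⟨k, hk⟩
    simp only [Tstar, zeroExtend, dif_pos hk]
    split_ifs <;> first | omega | simp_all
  have hcoeff : ∀ d, (diagSum N B d * (if d = 0 then star (tmatCoeff N u 0)
      else 2 * star (tmatCoeff N u d))).re = 2 * (diagSum N B d).re * zeroExtend u d
        + if d = 0 then 0 else 2 * (diagSum N B d).im * zeroExtend u (N - 1 + d) := by
    intro d
    split_ifs with hd
    · subst hd
      rw [tmatCoeff, if_pos rfl, Complex.star_def, conj_ofReal, re_mul_ofReal]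
      ring
    · rw [tmatCoeff, if_neg hd, Complex.star_def, map_add, map_mul, conj_I, conj_ofReal,
        conj_ofReal]
      simp only [mul_re, mul_im, add_re, add_im, ofReal_re, ofReal_im, I_re, I_im, re_ofNat,
        im_ofNat, neg_re, neg_im]
      ring
  simp only [hfin, hcoeff, Finset.sum_add_distrib, sum_range_ite_zero_eq_sum_range_pred]
  rw [Fin.sum_univ_eq_sum_range (fun k => (if k < N then 2 * (diagSum N B k).re
      else 2 * (diagSum N B (k - N + 1)).im) * zeroExtend u k),
    show Finset.range (2 * N - 1) = Finset.range (N + (N - 1)) by congr 1; omega,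
    Finset.sum_range_add]
  congr 1
  · exact Finset.sum_congr rfl fun d hd => by simp [Finset.mem_range.1 hd]
  · refine Finset.sum_congr rfl fun j hj => ?_
    have := Finset.mem_range.1 hj
    simp only [show N + j - N + 1 = j + 1 by omega, show N - 1 + (j + 1) = N + j by omega]
    simp

theorem re_trace_conjTranspose_Tmat_mul (N : ℕ) (u : Fin (2*N-1) → ℝ)
    {B : Matrix (Fin N) (Fin N) ℂ} (hB : B.IsHermitian) :
    (trace ((Tmat N u)ᴴ * B)).re = ∑ k, Tstar N B k * u k := by
  rw [Tmat_eq_hermToeplitz, re_trace_conjTranspose_hermToeplitz_mul N _ hB,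
    sum_Tstar_mul_eq_sum_diagSum]

theorem re_dotProduct_Tmat_mulVec (N : ℕ) (u : Fin (2*N-1) → ℝ) (s : Fin N → ℂ) :
    (star s ⬝ᵥ Tmat N u *ᵥ s).re = ∑ k, Tstar N (vecMulVec s (star s)) k * u k := by
  rw [← re_trace_conjTranspose_Tmat_mul N u (posSemidef_vecMulVec_self_star s).isHermitian,
    (isHermitian_Tmat N u).eq, mul_vecMulVec, trace_vecMulVec, dotProduct_comm]

theorem stmt12_general (N : ℕ) (ρ : ℝ) (s : Fin N → ℂ) (z : Fin (2*N-1) → ℝ)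
    (hρ : 0 < ρ)
    (hc : ∀ u : Fin (2*N-1) → ℝ, (Tmat N u).PosSemidef →
      0 ≤ ∑ i, (z i - (1/(4*ρ)) * Tstar N (Matrix.vecMulVec s (star s)) i) * u i) :
    ∀ (v : ℝ) (x : Fin N → ℂ) (u : Fin (2*N-1) → ℝ), (Kmat N v x u).PosSemidef →
      0 ≤ ρ * v + (star s ⬝ᵥ x).re + ∑ i, z i * u i := by
  intro v x u hK
  have hdual := hc u (hK.submatrix Sum.inl)
  simp only [sub_mul, Finset.sum_sub_distrib, mul_assoc, ← Finset.mul_sum,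
    ← re_dotProduct_Tmat_mulVec] at hdual
  -- `Kmat N v x u` unfolds to the `fromBlocks` matrix of the lemma
  have hsquare := hK.fromBlocks_quadratic_nonneg (A := Tmat N u) (1 / (2 * ρ)) s
  have hscaled : ρ * ((1 / (2 * ρ)) ^ 2 * (star s ⬝ᵥ Tmat N u *ᵥ s).re
      + 2 * (1 / (2 * ρ)) * (star s ⬝ᵥ x).re + v)
      = 1 / (4 * ρ) * (star s ⬝ᵥ Tmat N u *ᵥ s).re + (star s ⬝ᵥ x).re + ρ * v := by
    field_simp; ring
  linarith [mul_nonneg hρ.le hsquare]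

/-- if ρ > 0 and z - (1/(4ρ)) T*(s sᴴ) ∈ C*, then (ρ, s, z) ∈ K*. -/
theorem stmt12 (N : ℕ) (hN : 1 ≤ N) (ρ : ℝ) (s : Fin N → ℂ) (z : Fin (2*N-1) → ℝ)
    (hρ : 0 < ρ)
    (hc : ∀ u : Fin (2*N-1) → ℝ, (Tmat N u).PosSemidef →
      0 ≤ ∑ i, (z i - (1/(4*ρ)) * Tstar N (Matrix.vecMulVec s (star s)) i) * u i) :
    ∀ (v : ℝ) (x : Fin N → ℂ) (u : Fin (2*N-1) → ℝ), (Kmat N v x u).PosSemidef →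
      0 ≤ ρ * v + (star s ⬝ᵥ x).re + ∑ i, z i * u i :=
  stmt12_general N ρ s z hρ hc
end
end

section
/- (Dual cone characterization, ρ = 0 case) λ = (0, s, z) belongs to K* if and only if s = 0 and z ∈ C*. -/
/-!
If `s ≠ 0`, take `u₀` with `T(u₀) = I` and `x = -t s`, `v = ‖x‖²`: the block matrix
`[[I, x], [xᴴ, ‖x‖²]] = [I, x]ᴴ [I, x]` is positive semidefinite, while the pairing equals
`const - t ‖s‖²`, which is negative for large `t`. Once `s = 0` the pairing only sees `u`, and the
`u` admitting some feasible `(v, x)` are exactly those with `T(u) ⪰ 0`: take `v = 0`, `x = 0`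
one way and the principal submatrix `T(u)` of the block matrix the other way.
-/

open Complex Matrix ComplexOrder

noncomputable section

section BlockMatrix

variable {m n R : Type*} [Fintype m] [Fintype n] [DecidableEq m]
  [Ring R] [PartialOrder R] [StarRing R]

lemma Matrix.PosSemidef.fromBlocks_zero {A : Matrix m m R} (hA : A.PosSemidef) :
    (fromBlocks A 0 0 (0 : Matrix n n R)).PosSemidef := by
  have h := hA.mul_mul_conjTranspose_same (fromRows (1 : Matrix m m R) (0 : Matrix n m R))
  rw [conjTranspose_fromRows_eq_fromCols_conjTranspose, fromRows_mul, fromRows_mul_fromCols] at h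
  simpa using h

lemma Matrix.posSemidef_fromBlocks_one [StarOrderedRing R] (B : Matrix m n R) :
    (fromBlocks 1 B Bᴴ (Bᴴ * B)).PosSemidef := by
  simpa [conjTranspose_fromCols_eq_fromRows_conjTranspose, fromRows_mul_fromCols]
    using posSemidef_conjTranspose_mul_self (fromCols (1 : Matrix m m R) B)

end BlockMatrix

lemma Tmat_eq_one (N : ℕ) : Tmat N (fun k => if (k : ℕ) = 0 then 1/2 else 0) = 1 := by
  ext n m
  simp only [Tmat]
  rcases lt_trichotomy (n : ℕ) m with h | h | h
  · have hnm : n ≠ m := Fin.ne_of_lt h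
    rw [if_pos h.le]
    simp [show (m : ℕ) - n ≠ 0 by omega, one_apply, hnm]
  · obtain rfl : n = m := Fin.ext h
    simp [show 0 < 2 * N - 1 by omega]
  · have hnm : n ≠ m := (Fin.ne_of_lt h).symm
    rw [if_neg (by omega)]
    simp [show (n : ℕ) - m ≠ 0 by omega, one_apply, hnm]

section Kmat

variable {N : ℕ} {u : Fin (2*N-1) → ℝ}

lemma Kmat_posSemidef_of_Tmat_eq_one (hu : Tmat N u = 1) (x : Fin N → ℂ) :
    (Kmat N (star x ⬝ᵥ x).re x u).PosSemidef := by
  have hK : Kmat N (star x ⬝ᵥ x).re x u =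
      fromBlocks 1 (replicateCol Unit x) (replicateCol Unit x)ᴴ
        ((replicateCol Unit x)ᴴ * replicateCol Unit x) := by
    rw [Kmat, hu]
    congr 1
    ext
    exact Complex.ext rfl (Complex.nonneg_iff.mp (dotProduct_star_self_nonneg x)).2
  rw [hK]
  exact posSemidef_fromBlocks_one _

lemma Kmat_zero_zero_posSemidef (hu : (Tmat N u).PosSemidef) : (Kmat N 0 0 u).PosSemidef := by
  have hK : Kmat N 0 0 u = fromBlocks (Tmat N u) 0 0 0 := by
    rw [Kmat]
    congr 1
    ext
    simp
  rw [hK]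
  exact hu.fromBlocks_zero

lemma Matrix.PosSemidef.Tmat_of_Kmat {v : ℝ} {x : Fin N → ℂ} (h : (Kmat N v x u).PosSemidef) :
    (Tmat N u).PosSemidef :=
  h.submatrix Sum.inl

end Kmat

theorem stmt13_general (N : ℕ) (s : Fin N → ℂ) (z : Fin (2*N-1) → ℝ) :
    (∀ (v : ℝ) (x : Fin N → ℂ) (u : Fin (2*N-1) → ℝ), (Kmat N v x u).PosSemidef →
        0 ≤ (0:ℝ) * v + (star s ⬝ᵥ x).re + ∑ i, z i * u i) ↔
      (s = 0 ∧ ∀ u : Fin (2*N-1) → ℝ, (Tmat N u).PosSemidef → 0 ≤ ∑ i, z i * u i) := by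
  constructor
  · intro h
    refine ⟨?_, fun u hu => by simpa using h 0 0 u (Kmat_zero_zero_posSemidef hu)⟩
    by_contra hs
    set u₀ : Fin (2*N-1) → ℝ := fun k => if (k : ℕ) = 0 then 1/2 else 0
    set a := ∑ i, z i * u₀ i
    set b := (star s ⬝ᵥ s).re
    have hb : 0 < b := (Complex.pos_iff.mp (dotProduct_star_self_pos_iff.mpr hs)).1
    set t := (a + 1) / b
    have hpair := h _ (-(t : ℂ) • s) u₀ (Kmat_posSemidef_of_Tmat_eq_one (Tmat_eq_one N) _)
    have htb : t * b = a + 1 := div_mul_cancel₀ _ hb.ne'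
    simp only [dotProduct_smul, smul_eq_mul, neg_mul, neg_re, re_ofReal_mul, zero_mul,
      zero_add] at hpair
    linarith
  · rintro ⟨rfl, hz⟩ v x u hK
    simpa using hz u hK.Tmat_of_Kmat

/-- (0, s, z) ∈ K* iff s = 0 and z ∈ C*. -/
theorem stmt13 (N : ℕ) (hN : 1 ≤ N) (s : Fin N → ℂ) (z : Fin (2*N-1) → ℝ) :
    (∀ (v : ℝ) (x : Fin N → ℂ) (u : Fin (2*N-1) → ℝ), (Kmat N v x u).PosSemidef →
        0 ≤ (0:ℝ) * v + (star s ⬝ᵥ x).re + ∑ i, z i * u i) ↔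
      (s = 0 ∧ ∀ u : Fin (2*N-1) → ℝ, (Tmat N u).PosSemidef → 0 ≤ ∑ i, z i * u i) :=
  stmt13_general N s z
end
end
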